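/- arXiv:1410.4787 — 3 statements merged into one kernel-verified Lean document; each statement's English description precedes it below -/
import Mathlib

section
/- Let Z₁,…,Z_r be n×k_i real matrices, let Z = [Z₁,…,Z_r], and let q = rank(Z). Then there exists an n×n orthogonal matrix U and q×q symmetric nonnegative definite matrices A₁,…,A_r with A₁+⋯+A_r positive definite such that for all κ₁,…,κ_r ≥ 0, I_n + Σᵢ κᵢ ZᵢZᵢ' = U · blockdiag(I_q + Σᵢ κᵢ Aᵢ, I_{n−q}) · U'. -/
open Matrix Filter

noncomputable def Vtilde {n r : ℕ} {k : Fin r → ℕ}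
    (Z : ∀ i : Fin r, Matrix (Fin n) (Fin (k i)) ℝ) (κ : Fin r → ℝ) :
    Matrix (Fin n) (Fin n) ℝ :=
  1 + ∑ i, κ i • (Z i * (Z i)ᵀ)

noncomputable def colSpaceXZ {n m r : ℕ} {k : Fin r → ℕ}
    (X : Matrix (Fin n) (Fin m) ℝ) (Z : ∀ i : Fin r, Matrix (Fin n) (Fin (k i)) ℝ) :
    Submodule ℝ (Fin n → ℝ) :=
  LinearMap.range X.mulVecLin ⊔ ⨆ i, LinearMap.range (Z i).mulVecLin

noncomputable def sXZ {n m r : ℕ} {k : Fin r → ℕ}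
    (X : Matrix (Fin n) (Fin m) ℝ) (Z : ∀ i : Fin r, Matrix (Fin n) (Fin (k i)) ℝ)
    (y : Fin n → ℝ) : ℝ :=
  let L : EuclideanSpace ℝ (Fin n) ≃ₗ[ℝ] (Fin n → ℝ) :=
    WithLp.linearEquiv 2 ℝ (Fin n → ℝ)
  let S : Submodule ℝ (EuclideanSpace ℝ (Fin n)) :=
    (colSpaceXZ X Z).map L.symm.toLinearMap
  ‖(Submodule.orthogonalProjectionOnto Sᗮ (L.symm y) : EuclideanSpace ℝ (Fin n))‖ ^ 2

noncomputable def ltilde {n m r : ℕ} {k : Fin r → ℕ}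
    (X : Matrix (Fin n) (Fin m) ℝ) (Z : ∀ i : Fin r, Matrix (Fin n) (Fin (k i)) ℝ)
    (y : Fin n → ℝ) (β : Fin m → ℝ) (κ₀ : ℝ) (κ : Fin r → ℝ) : ℝ :=
  n * Real.log κ₀ + Real.log (Vtilde Z κ).det
    + κ₀⁻¹ * ((y - X.mulVec β) ⬝ᵥ (Vtilde Z κ)⁻¹.mulVec (y - X.mulVec β))

/-! Let `S` be the column space of `Z = [Z₁, …, Z_r]`, of dimension `q`. An orthonormal basis of
`ℝⁿ` whose first `q` vectors span `S` and whose last `n - q` vectors span `Sᗮ` is an orthogonal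
matrix `U` with `Uᵀ Z = [B; 0]`. Cutting `B = [B₁, …, B_r]` along the blocks of `Z` gives
`Uᵀ Zᵢ Zᵢᵀ U = blockdiag(Bᵢ Bᵢᵀ, 0)`, so `Aᵢ = Bᵢ Bᵢᵀ` works, and `∑ Aᵢ = B Bᵀ` is positive definite
because `B` has `q = rank Z` linearly independent rows. -/

open Module

theorem Submodule.exists_orthonormalBasis_sum {𝕜 E : Type*} [RCLike 𝕜] [NormedAddCommGroup E]
    [InnerProductSpace 𝕜 E] [FiniteDimensional 𝕜 E] (K : Submodule 𝕜 E) {q p : ℕ}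
    (hq : finrank 𝕜 K = q) (hp : finrank 𝕜 Kᗮ = p) :
    ∃ b : OrthonormalBasis (Fin q ⊕ Fin p) 𝕜 E,
      (∀ i, b (Sum.inl i) ∈ K) ∧ ∀ j, b (Sum.inr j) ∈ Kᗮ := by
  subst hq hp
  exact ⟨((stdOrthonormalBasis 𝕜 K).prod (stdOrthonormalBasis 𝕜 Kᗮ)).map
    K.orthogonalDecomposition.symm, by simp, by simp⟩

namespace Matrix

variable {ι l m m₁ m₂ n : Type*}

theorem mul_eq_sum_sigma {R : Type*} [NonUnitalNonAssocSemiring R] [Fintype ι]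
    {κ : ι → Type*} [∀ i, Fintype (κ i)] (M : Matrix l (Σ i, κ i) R)
    (N : Matrix (Σ i, κ i) n R) :
    M * N = ∑ i, M.submatrix id (Sigma.mk i) * N.submatrix (Sigma.mk i) id := by
  ext x y
  simp [mul_apply, sum_apply, Fintype.sum_sigma]

theorem one_add_sum_smul_fromBlocks_zero {R : Type*} [Semiring R] [Fintype ι] [DecidableEq m]
    [DecidableEq n] (c : ι → R) (A : ι → Matrix m m R) :
    (1 : Matrix (m ⊕ n) (m ⊕ n) R) + ∑ i, c i • fromBlocks (A i) 0 0 0 =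
      fromBlocks (1 + ∑ i, c i • A i) 0 0 1 := by
  ext (a | a) (b | b) <;> simp [sum_apply, one_apply]

theorem rank_mul_eq_right_of_mul_eq_one {R : Type*} [CommSemiring R] [StrongRankCondition R]
    [Fintype m] [Fintype n] [Fintype l] [DecidableEq m] {U : Matrix m n R} {V : Matrix n m R}
    (hUV : U * V = 1) (M : Matrix m l R) : (V * M).rank = M.rank := by
  refine le_antisymm (rank_mul_le_right _ _) ?_
  simpa [← Matrix.mul_assoc, hUV] using rank_mul_le_right U (V * M)

theorem rank_fromRows_zero {R : Type*} [CommSemiring R] [StrongRankCondition R] [Fintype m₁]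
    [Fintype m₂] [Fintype n] [DecidableEq m₁] (B : Matrix m₁ n R) :
    (fromRows B (0 : Matrix m₂ n R)).rank = B.rank := by
  have hB : fromRows B (0 : Matrix m₂ n R) = fromRows (1 : Matrix m₁ m₁ R) 0 * B := by
    rw [fromRows_mul, Matrix.one_mul, Matrix.zero_mul]
  have hB' : B = fromCols (1 : Matrix m₁ m₁ R) (0 : Matrix m₁ m₂ R) *
      fromRows B (0 : Matrix m₂ n R) := by
    rw [fromCols_mul_fromRows, Matrix.one_mul, Matrix.zero_mul, add_zero]
  refine le_antisymm ?_ ?_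
  · rw [hB]
    exact rank_mul_le_right _ _
  · conv_lhs => rw [hB']
    exact rank_mul_le_right _ _

theorem posDef_mul_transpose_self_of_rank_eq_card [Fintype m] [Fintype n] (B : Matrix m n ℝ)
    (hB : B.rank = Fintype.card m) : (B * Bᵀ).PosDef := by
  have hrows : LinearIndependent ℝ B.row := by
    rw [linearIndependent_iff_card_eq_finrank_span, Set.finrank, ← rank_eq_finrank_span_row, hB]
  simpa using PosDef.mul_conjTranspose_self B (vecMul_injective_iff.mpr hrows)

theorem mul_transpose_self_eq_of_transpose_mul_eq_fromRows {R : Type*} [CommSemiring R]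
    [Fintype m] [Fintype m₁] [Fintype m₂] [Fintype n] [DecidableEq m]
    {U : Matrix m (m₁ ⊕ m₂) R} (hU : U * Uᵀ = 1) {Z : Matrix m n R} {B : Matrix m₁ n R}
    (hZ : Uᵀ * Z = fromRows B (0 : Matrix m₂ n R)) :
    Z * Zᵀ = U * fromBlocks (B * Bᵀ) 0 0 (0 : Matrix m₂ m₂ R) * Uᵀ := by
  have hZU : Z = U * fromRows B (0 : Matrix m₂ n R) := by
    rw [← hZ, ← Matrix.mul_assoc, hU, Matrix.one_mul]
  rw [hZU, transpose_mul, transpose_fromRows, Matrix.mul_assoc, ← Matrix.mul_assoc (fromRows B 0),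
    fromRows_mul_fromCols, ← Matrix.mul_assoc]
  simp

theorem exists_orthogonal_transpose_mul_eq_fromRows {κ : Type*} [Fintype κ] {n : ℕ}
    (M : Matrix (Fin n) κ ℝ) {q : ℕ} (hq : M.rank = q) :
    ∃ (U : Matrix (Fin n) (Fin q ⊕ Fin (n - q)) ℝ) (B : Matrix (Fin q) κ ℝ),
      U * Uᵀ = 1 ∧ Uᵀ * U = 1 ∧ Uᵀ * M = fromRows B (0 : Matrix (Fin (n - q)) κ ℝ) ∧
        (B * Bᵀ).PosDef := by
  subst hq
  set S : Submodule ℝ (EuclideanSpace ℝ (Fin n)) :=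
    Submodule.span ℝ (Set.range fun k => WithLp.toLp 2 (M.col k))
  have hS : finrank ℝ S = M.rank := by
    rw [rank_eq_finrank_span_cols,
      ← (WithLp.linearEquiv 2 ℝ (Fin n → ℝ)).symm.finrank_map_eq, Submodule.map_span,
      ← Set.range_comp]
    rfl
  have hSperp : finrank ℝ Sᗮ = n - M.rank := by
    have := S.finrank_add_finrank_orthogonal
    rw [finrank_euclideanSpace_fin] at this
    omega
  obtain ⟨b, -, hbSperp⟩ := S.exists_orthonormalBasis_sum hS hSperp
  set U := (EuclideanSpace.basisFun (Fin n) ℝ).toBasis.toMatrix b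
  have hUUt : U * Uᵀ = 1 := by
    simpa using (EuclideanSpace.basisFun _ ℝ).toMatrix_orthonormalBasis_self_mul_conjTranspose b
  have hUtU : Uᵀ * U = 1 := by
    simpa using (EuclideanSpace.basisFun _ ℝ).toMatrix_orthonormalBasis_conjTranspose_mul_self b
  have hzero : (Uᵀ * M).toRows₂ = 0 := by
    ext j k
    have := Submodule.inner_left_of_mem_orthogonal
      (Submodule.subset_span (Set.mem_range_self k) : WithLp.toLp 2 (M.col k) ∈ S) (hbSperp j)
    simpa [U, mul_apply, PiLp.inner_apply, Basis.toMatrix_apply, mul_comm] using this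
  refine ⟨U, (Uᵀ * M).toRows₁, hUUt, hUtU, by rw [← hzero, fromRows_toRows],
    posDef_mul_transpose_self_of_rank_eq_card _ ?_⟩
  rw [Fintype.card_fin, ← rank_fromRows_zero (m₂ := Fin (n - M.rank)), ← hzero, fromRows_toRows,
    rank_mul_eq_right_of_mul_eq_one hUUt]

end Matrix

/-- Corrected Proposition 3.2 of Demidenko–Massam (1999): block representation of the
scaled covariance matrix. -/
theorem scaled_covariance_block_representation
    (n r : ℕ) (k : Fin r → ℕ) (Z : ∀ i : Fin r, Matrix (Fin n) (Fin (k i)) ℝ)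
    (q : ℕ)
    (hq : q = Matrix.rank (Matrix.of fun x (p : (i : Fin r) × Fin (k i)) => Z p.1 x p.2)) :
    ∃ (U : Matrix (Fin n) (Fin q ⊕ Fin (n - q)) ℝ)
      (A : Fin r → Matrix (Fin q) (Fin q) ℝ),
      U * Uᵀ = 1 ∧ Uᵀ * U = 1 ∧
      (∀ i, (A i).IsSymm ∧ (A i).PosSemidef) ∧ (∑ i, A i).PosDef ∧
      ∀ κ : Fin r → ℝ, (∀ i, 0 ≤ κ i) →
        Vtilde Z κ =
          U * Matrix.fromBlocks (1 + ∑ i, κ i • A i) 0 0 (1 : Matrix (Fin (n - q)) (Fin (n - q)) ℝ) * Uᵀ := by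
  obtain ⟨U, B, hUUt, hUtU, hUZ, hB⟩ := exists_orthogonal_transpose_mul_eq_fromRows _ hq.symm
  set Bi := fun i => B.submatrix id (Sigma.mk i)
  have hUZi (i : Fin r) :
      Uᵀ * Z i = fromRows (Bi i) (0 : Matrix (Fin (n - q)) (Fin (k i)) ℝ) := by
    ext (j | j) a
    exacts [congrFun₂ hUZ (.inl j) ⟨i, a⟩, congrFun₂ hUZ (.inr j) ⟨i, a⟩]
  set A : Fin r → Matrix (Fin q) (Fin q) ℝ := fun i => Bi i * (Bi i)ᵀ
  refine ⟨U, A, hUUt, hUtU, fun i => ⟨by simp [A, IsSymm, transpose_mul],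
    by simpa using posSemidef_self_mul_conjTranspose (Bi i)⟩, by rwa [mul_eq_sum_sigma] at hB,
    fun κ _ => ?_⟩
  set O : Matrix (Fin (n - q)) (Fin (n - q)) ℝ := 0
  calc Vtilde Z κ = 1 + ∑ i, κ i • (U * fromBlocks (A i) 0 0 O * Uᵀ) := by
        simp only [Vtilde, A, O, mul_transpose_self_eq_of_transpose_mul_eq_fromRows hUUt (hUZi _)]
    _ = U * (1 + ∑ i, κ i • fromBlocks (A i) 0 0 O) * Uᵀ := by
        simp only [Matrix.mul_add, Matrix.add_mul, Matrix.mul_one, hUUt, Matrix.mul_sum,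
          Matrix.sum_mul, Matrix.mul_smul, Matrix.smul_mul]
    _ = _ := by rw [one_add_sum_smul_fromBlocks_zero]
end

section
/- Let V be a symmetric positive definite n×n matrix, y ∈ ℝⁿ, X an n×m matrix, and P the orthogonal projection onto the orthogonal complement of M(X) + M(Z), where Z is n×k. If the quadratic form satisfies V⁻¹ ⪰ c·P for some c > 0 in the sense that (y − Xβ)'V⁻¹(y − Xβ) ≥ y'Py for all β, then in particular for V = Ṽ(κ) = I + Σκᵢ ZᵢZᵢ' one has (y − Xβ)'Ṽ(κ)⁻¹(y − Xβ) ≥ y'P_{(H+M)^⊥} y for all β ∈ ℝᵐ and all κ ∈ [0,∞)^r. -/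
/-! Write `y - Xβ = p + w`, where `p` is the residual of `y` against `M(X) + M(Z)` and
`w ∈ M(X) + M(Z)`. As `Zᵢᵀ p = 0`, `p` is fixed by `Ṽ(κ)`, hence by `Ṽ(κ)⁻¹`; the cross
terms vanish and the form equals `pᵀp + wᵀ Ṽ(κ)⁻¹ w ≥ pᵀp = s_{X,Z}`. -/

open Matrix Filter

namespace Matrix

variable {n : Type*} [Fintype n]

lemma transpose_mulVec_eq_zero_of_forall_dotProduct_mulVec {l : Type*} [Fintype l]
    (A : Matrix n l ℝ) {p : n → ℝ} (h : ∀ x, p ⬝ᵥ A *ᵥ x = 0) : Aᵀ *ᵥ p = 0 := by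
  rw [mulVec_transpose, ← dotProduct_self_eq_zero, ← dotProduct_mulVec]
  exact h _

lemma PosSemidef.dotProduct_self_le_dotProduct_mulVec_add {A : Matrix n n ℝ} (hA : A.PosSemidef)
    {p w : n → ℝ} (hAp : A *ᵥ p = p) (hpw : p ⬝ᵥ w = 0) :
    p ⬝ᵥ p ≤ (p + w) ⬝ᵥ A *ᵥ (p + w) := by
  have hpA : p ⬝ᵥ A *ᵥ w = 0 := by
    rw [dotProduct_mulVec, ← mulVec_transpose, ← conjTranspose_eq_transpose_of_trivial,
      hA.isHermitian.eq, hAp, hpw]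
  have hwA : 0 ≤ w ⬝ᵥ A *ᵥ w := hA.dotProduct_mulVec_nonneg w
  rw [mulVec_add, add_dotProduct, dotProduct_add, dotProduct_add, hAp, hpA, dotProduct_comm w p,
    hpw]
  linarith

lemma inv_mulVec_eq_self_of_mulVec_eq_self [DecidableEq n] {A : Matrix n n ℝ}
    (hA : IsUnit A) {p : n → ℝ} (hAp : A *ᵥ p = p) : A⁻¹ *ᵥ p = p := by
  conv_lhs => rw [← hAp, mulVec_mulVec, nonsing_inv_mul _ ((isUnit_iff_isUnit_det _).mp hA),
    one_mulVec]

end Matrix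

section OrthResidual

variable {n : ℕ}

noncomputable def orthResidual (K : Submodule ℝ (Fin n → ℝ)) (y : Fin n → ℝ) : Fin n → ℝ :=
  WithLp.ofLp <| (K.map (WithLp.linearEquiv 2 ℝ (Fin n → ℝ)).symm.toLinearMap)ᗮ.starProjection
    (WithLp.toLp 2 y)

lemma orthResidual_dotProduct_eq_zero {K : Submodule ℝ (Fin n → ℝ)} (y : Fin n → ℝ)
    {u : Fin n → ℝ} (hu : u ∈ K) : orthResidual K y ⬝ᵥ u = 0 := by
  have h := Submodule.inner_right_of_mem_orthogonal
    (Submodule.mem_map_of_mem (f := (WithLp.linearEquiv 2 ℝ (Fin n → ℝ)).symm.toLinearMap) hu)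
    (Submodule.starProjection_apply_mem _ (WithLp.toLp 2 y))
  rwa [EuclideanSpace.inner_eq_star_dotProduct, star_trivial] at h

lemma sub_orthResidual_mem (K : Submodule ℝ (Fin n → ℝ)) (y : Fin n → ℝ) :
    y - orthResidual K y ∈ K := by
  obtain ⟨u, hu, hproj⟩ := Submodule.starProjection_apply_mem
    (K.map (WithLp.linearEquiv 2 ℝ (Fin n → ℝ)).symm.toLinearMap) (WithLp.toLp 2 y)
  simpa [orthResidual, ← hproj] using hu

end OrthResidual

lemma sXZ_eq_orthResidual_dotProduct {n m r : ℕ} {k : Fin r → ℕ} (X : Matrix (Fin n) (Fin m) ℝ)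
    (Z : ∀ i : Fin r, Matrix (Fin n) (Fin (k i)) ℝ) (y : Fin n → ℝ) :
    sXZ X Z y = orthResidual (colSpaceXZ X Z) y ⬝ᵥ orthResidual (colSpaceXZ X Z) y := by
  rw [sXZ, ← real_inner_self_eq_norm_sq, EuclideanSpace.inner_eq_star_dotProduct, star_trivial]
  rfl

lemma Vtilde_posDef {n r : ℕ} {k : Fin r → ℕ} (Z : ∀ i : Fin r, Matrix (Fin n) (Fin (k i)) ℝ)
    {κ : Fin r → ℝ} (hκ : ∀ i, 0 ≤ κ i) : (Vtilde Z κ).PosDef := by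
  refine PosDef.one.add_posSemidef (posSemidef_sum _ fun i _ => ?_)
  simpa using (posSemidef_self_mul_conjTranspose (Z i)).smul (hκ i)

lemma Vtilde_mulVec_eq_self {n r : ℕ} {k : Fin r → ℕ}
    (Z : ∀ i : Fin r, Matrix (Fin n) (Fin (k i)) ℝ) (κ : Fin r → ℝ) {p : Fin n → ℝ}
    (hp : ∀ i, (Z i)ᵀ *ᵥ p = 0) : Vtilde Z κ *ᵥ p = p := by
  simp [Vtilde, add_mulVec, sum_mulVec, smul_mulVec, ← mulVec_mulVec, hp]

/-- For all `β` and all `κ ≥ 0`, the quadratic form `(y − Xβ)ᵀ Ṽ(κ)⁻¹ (y − Xβ)` is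
bounded below by `yᵀ P_{(H+M)ᗮ} y = s_{X,Z}`, the squared norm of the orthogonal
projection of `y` onto the orthogonal complement of `M(X) + M(Z)`. -/
theorem quadForm_ge_sXZ
    (n m r : ℕ) (k : Fin r → ℕ)
    (X : Matrix (Fin n) (Fin m) ℝ) (Z : ∀ i : Fin r, Matrix (Fin n) (Fin (k i)) ℝ)
    (y : Fin n → ℝ) :
    ∀ (β : Fin m → ℝ) (κ : Fin r → ℝ), (∀ i, 0 ≤ κ i) →
      sXZ X Z y ≤
        (y - X.mulVec β) ⬝ᵥ (Vtilde Z κ)⁻¹.mulVec (y - X.mulVec β) := by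
  intro β κ hκ
  set p := orthResidual (colSpaceXZ X Z) y
  have hp : ∀ u ∈ colSpaceXZ X Z, p ⬝ᵥ u = 0 := fun u hu => orthResidual_dotProduct_eq_zero y hu
  have hZp : ∀ i, (Z i)ᵀ *ᵥ p = 0 := fun i =>
    transpose_mulVec_eq_zero_of_forall_dotProduct_mulVec _ fun x =>
      hp _ (Submodule.mem_sup_right (Submodule.mem_iSup_of_mem i ⟨x, rfl⟩))
  have hV := Vtilde_posDef Z hκ
  have hVp : (Vtilde Z κ)⁻¹ *ᵥ p = p :=
    inv_mulVec_eq_self_of_mulVec_eq_self hV.isUnit (Vtilde_mulVec_eq_self Z κ hZp)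
  have hpw : p ⬝ᵥ (y - X *ᵥ β - p) = 0 := by
    refine hp _ ?_
    rw [sub_right_comm]
    exact sub_mem (sub_orthResidual_mem _ y) (Submodule.mem_sup_left ⟨β, rfl⟩)
  rw [sXZ_eq_orthResidual_dotProduct]
  simpa using hV.inv.posSemidef.dotProduct_self_le_dotProduct_mulVec_add hVp hpw
end

section
/- If y ∈ M(X,Z) (the column space of the matrix [X, Z₁,…,Z_r]), then the infimum of l̃(β,κ₀,κ,y) = n log κ₀ + log det Ṽ(κ) + κ₀⁻¹ (y − Xβ)'Ṽ(κ)⁻¹(y − Xβ) over β ∈ ℝᵐ, κ₀ ∈ (0,∞), κ ∈ [0,∞)^r is −∞. -/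
/-!
Write `y = Xβ + W x` with `W = [Z₁ ⋯ Z_r]` and follow the ray `κ₀ = t⁻¹`, `κᵢ = t`,
`t → ∞`. Then `Ṽ = I + t W Wᵀ`, the quadratic term `t (W x)ᵀ Ṽ⁻¹ (W x)` stays below `xᵀx`, and
`det Ṽ = det (I + t Wᵀ W)` grows at most like `t ^ K` with `K = ∑ kᵢ`. Hence
`l̃ ≤ const - (n - K) log t`, which tends to `-∞` because `K < n`.
-/

open Matrix Filter

namespace Matrix

section

variable {m ι : Type*} [Fintype m] [DecidableEq m] [Fintype ι]

theorem posDef_one_add_smul_mul_transpose (W : Matrix m ι ℝ) {t : ℝ} (ht : 0 ≤ t) :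
    (1 + t • (W * Wᵀ)).PosDef :=
  PosDef.one.add_posSemidef ((posSemidef_self_mul_conjTranspose W).smul ht)

theorem dotProduct_inv_one_add_smul_mul_transpose_le (W : Matrix m ι ℝ) (u : ι → ℝ)
    {t : ℝ} (ht : 0 < t) :
    (W *ᵥ u) ⬝ᵥ (1 + t • (W * Wᵀ))⁻¹ *ᵥ (W *ᵥ u) ≤ (u ⬝ᵥ u) / t := by
  set V := 1 + t • (W * Wᵀ)
  set b := V⁻¹ *ᵥ (W *ᵥ u)
  have hVb : V *ᵥ b = W *ᵥ u := by
    have hV := (posDef_one_add_smul_mul_transpose W ht.le).det_pos.ne'.isUnit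
    rw [mulVec_mulVec, mul_nonsing_inv _ hV, one_mulVec]
  clear_value b
  set w := Wᵀ *ᵥ b
  have hQ_w : (W *ᵥ u) ⬝ᵥ b = u ⬝ᵥ w := by
    rw [← dotProduct_comm b, dotProduct_mulVec, ← mulVec_transpose, dotProduct_comm]
  have hQ_b : (W *ᵥ u) ⬝ᵥ b = b ⬝ᵥ b + t * (w ⬝ᵥ w) := by
    rw [← hVb, add_mulVec, one_mulVec, smul_mulVec, ← mulVec_mulVec, add_dotProduct,
      smul_dotProduct, smul_eq_mul, dotProduct_comm (W *ᵥ w), dotProduct_mulVec,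
      ← mulVec_transpose, dotProduct_comm]
  -- With `Q = (W *ᵥ u) ⬝ᵥ b`: `2 t Q = 2 t (u ⬝ᵥ w) ≤ u ⬝ᵥ u + t² (w ⬝ᵥ w) ≤ u ⬝ᵥ u + t Q`.
  have hsq : 0 ≤ (u - t • w) ⬝ᵥ (u - t • w) := dotProduct_self_star_nonneg _
  have hexp : (u - t • w) ⬝ᵥ (u - t • w) = u ⬝ᵥ u - 2 * t * (u ⬝ᵥ w) + t ^ 2 * (w ⬝ᵥ w) := by
    simp only [sub_dotProduct, dotProduct_sub, smul_dotProduct, dotProduct_smul, smul_eq_mul,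
      dotProduct_comm w u]
    ring
  have hb : 0 ≤ b ⬝ᵥ b := dotProduct_self_star_nonneg _
  rw [le_div_iff₀ ht]
  nlinarith

omit [DecidableEq m] in
theorem abs_le_sum_sum_abs (M : Matrix m ι ℝ) (p : m) (q : ι) :
    |M p q| ≤ ∑ p', ∑ q', |M p' q'| :=
  (Finset.single_le_sum (f := fun q' => |M p q'|) (fun _ _ => abs_nonneg _)
    (Finset.mem_univ q)).trans
    (Finset.single_le_sum (f := fun p' => ∑ q', |M p' q'|)
      (fun _ _ => Finset.sum_nonneg fun _ _ => abs_nonneg _) (Finset.mem_univ p))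

theorem exists_det_one_add_smul_le (M : Matrix m m ℝ) :
    ∃ D > 0, ∀ t : ℝ, 1 ≤ t → (1 + t • M).det ≤ D * t ^ Fintype.card m := by
  set c := ∑ p, ∑ q, |M p q|
  have hc : 0 ≤ c := Finset.sum_nonneg fun _ _ => Finset.sum_nonneg fun _ _ => abs_nonneg _
  refine ⟨(Fintype.card m).factorial * (1 + c) ^ Fintype.card m, by positivity, fun t ht => ?_⟩
  have hentry : ∀ p q, |(1 + t • M) p q| ≤ t * (1 + c) := fun p q => by
    calc |(1 + t • M) p q| ≤ |(1 : Matrix m m ℝ) p q| + |t * M p q| := abs_add_le _ _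
      _ = |(1 : Matrix m m ℝ) p q| + t * |M p q| := by
          rw [abs_mul, abs_of_nonneg (zero_le_one.trans ht)]
      _ ≤ 1 + t * c := by
          gcongr
          · by_cases h : p = q <;> simp [one_apply, h]
          · exact abs_le_sum_sum_abs M p q
      _ ≤ t * (1 + c) := by nlinarith
  calc (1 + t • M).det ≤ |(1 + t • M).det| := le_abs_self _
    _ ≤ (Fintype.card m).factorial • (t * (1 + c)) ^ Fintype.card m :=
        det_le (abv := AbsoluteValue.abs) hentry
    _ = (Fintype.card m).factorial * (1 + c) ^ Fintype.card m * t ^ Fintype.card m := by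
        rw [nsmul_eq_mul, mul_pow]; ring

variable [DecidableEq ι]

theorem exists_det_one_add_smul_mul_transpose_le (W : Matrix m ι ℝ) :
    ∃ D > 0, ∀ t : ℝ, 1 ≤ t → (1 + t • (W * Wᵀ)).det ≤ D * t ^ Fintype.card ι := by
  obtain ⟨D, hD, hdet⟩ := exists_det_one_add_smul_le (Wᵀ * W)
  refine ⟨D, hD, fun t ht => ?_⟩
  rw [← Matrix.smul_mul, det_one_add_mul_comm, Matrix.mul_smul]
  exact hdet t ht

end

section

variable {R m ι : Type*} {κ : ι → Type*}

def sigmaFromCols (Z : ∀ i, Matrix m (κ i) R) : Matrix m (Σ i, κ i) R :=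
  of fun a p => Z p.1 a p.2

variable [Fintype ι] [∀ i, Fintype (κ i)]

theorem sigmaFromCols_mul_transpose [NonUnitalNonAssocSemiring R]
    (Z : ∀ i, Matrix m (κ i) R) :
    sigmaFromCols Z * (sigmaFromCols Z)ᵀ = ∑ i, Z i * (Z i)ᵀ := by
  ext a b
  simp only [mul_apply, transpose_apply, sigmaFromCols, of_apply, sum_apply, Fintype.sum_sigma]

theorem sigmaFromCols_mulVec_single [NonUnitalNonAssocSemiring R] [DecidableEq ι]
    (Z : ∀ i, Matrix m (κ i) R) (i : ι) (v : κ i → R) :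
    sigmaFromCols Z *ᵥ (fun p => Pi.single (M := fun i => κ i → R) i v p.1 p.2) = Z i *ᵥ v := by
  ext a
  simp only [mulVec, dotProduct, sigmaFromCols, of_apply, Fintype.sum_sigma]
  rw [Fintype.sum_eq_single i fun j hj => by simp [Pi.single_eq_of_ne hj], Pi.single_eq_same]

theorem range_mulVecLin_le_range_sigmaFromCols [CommSemiring R] [DecidableEq ι]
    (Z : ∀ i, Matrix m (κ i) R) (i : ι) :
    LinearMap.range (Z i).mulVecLin ≤ LinearMap.range (sigmaFromCols Z).mulVecLin := by
  rintro _ ⟨v, rfl⟩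
  exact ⟨_, sigmaFromCols_mulVec_single Z i v⟩

end

end Matrix

variable {n m r : ℕ} {k : Fin r → ℕ}

theorem Vtilde_const (Z : ∀ i : Fin r, Matrix (Fin n) (Fin (k i)) ℝ) (t : ℝ) :
    Vtilde Z (fun _ => t) = 1 + t • (sigmaFromCols Z * (sigmaFromCols Z)ᵀ) := by
  rw [Vtilde, sigmaFromCols_mul_transpose, Finset.smul_sum]

theorem exists_sub_mulVec_eq_sigmaFromCols_mulVec (X : Matrix (Fin n) (Fin m) ℝ)
    (Z : ∀ i : Fin r, Matrix (Fin n) (Fin (k i)) ℝ) {y : Fin n → ℝ}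
    (hy : y ∈ colSpaceXZ X Z) : ∃ β x, y - X *ᵥ β = sigmaFromCols Z *ᵥ x := by
  have hle : colSpaceXZ X Z ≤
      LinearMap.range X.mulVecLin ⊔ LinearMap.range (sigmaFromCols Z).mulVecLin :=
    sup_le_sup_left (iSup_le (range_mulVecLin_le_range_sigmaFromCols Z)) _
  obtain ⟨_, ⟨β, rfl⟩, _, ⟨x, rfl⟩, rfl⟩ := Submodule.mem_sup.mp (hle hy)
  exact ⟨β, x, add_sub_cancel_left _ _⟩

theorem exists_ltilde_inv_const_le {X : Matrix (Fin n) (Fin m) ℝ}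
    {Z : ∀ i : Fin r, Matrix (Fin n) (Fin (k i)) ℝ} {y : Fin n → ℝ} {β : Fin m → ℝ}
    {x : (Σ i, Fin (k i)) → ℝ} (hyx : y - X *ᵥ β = sigmaFromCols Z *ᵥ x) :
    ∃ c, ∀ t : ℝ, 1 ≤ t →
      ltilde X Z y β t⁻¹ (fun _ => t) ≤ c - (n - (∑ i, k i : ℕ)) * Real.log t := by
  set W := sigmaFromCols Z
  obtain ⟨D, hD, hdet⟩ := exists_det_one_add_smul_mul_transpose_le W
  refine ⟨Real.log D + x ⬝ᵥ x, fun t ht => ?_⟩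
  have ht0 : 0 < t := zero_lt_one.trans_le ht
  have hcard : Fintype.card (Σ i, Fin (k i)) = ∑ i, k i := by simp
  have hlogdet :
      Real.log (1 + t • (W * Wᵀ)).det ≤ Real.log D + (∑ i, k i : ℕ) * Real.log t :=
    calc Real.log (1 + t • (W * Wᵀ)).det
        ≤ Real.log (D * t ^ Fintype.card (Σ i, Fin (k i))) :=
          Real.log_le_log (posDef_one_add_smul_mul_transpose W ht0.le).det_pos (hdet t ht)
      _ = Real.log D + (∑ i, k i : ℕ) * Real.log t := by
          rw [Real.log_mul hD.ne' (by positivity), Real.log_pow, hcard]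
  have hquad : t * ((W *ᵥ x) ⬝ᵥ (1 + t • (W * Wᵀ))⁻¹ *ᵥ (W *ᵥ x)) ≤ x ⬝ᵥ x := by
    rw [← le_div_iff₀' ht0]
    exact dotProduct_inv_one_add_smul_mul_transpose_le W x ht0
  rw [ltilde, hyx, Vtilde_const, Real.log_inv, inv_inv]
  linarith

theorem ltilde_unbounded_below_of_mem_general
    (n m r : ℕ) (k : Fin r → ℕ) (hk : ∑ i, k i < n)
    (X : Matrix (Fin n) (Fin m) ℝ)
    (Z : ∀ i : Fin r, Matrix (Fin n) (Fin (k i)) ℝ)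
    (y : Fin n → ℝ) (hy : y ∈ colSpaceXZ X Z) :
    ∀ A : ℝ, ∃ (β : Fin m → ℝ) (κ₀ : ℝ) (κ : Fin r → ℝ),
      0 < κ₀ ∧ (∀ i, 0 ≤ κ i) ∧ ltilde X Z y β κ₀ κ < A := by
  intro A
  obtain ⟨β, x, hyx⟩ := exists_sub_mulVec_eq_sigmaFromCols_mulVec X Z hy
  obtain ⟨c, hc⟩ := exists_ltilde_inv_const_le hyx
  set t := Real.exp (max 0 (c - A + 1))
  have ht : 1 ≤ t := Real.one_le_exp (le_max_left _ _)
  have hlog : c - A + 1 ≤ Real.log t := by rw [Real.log_exp]; exact le_max_right _ _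
  have hlog0 : 0 ≤ Real.log t := Real.log_nonneg ht
  have hgap : 1 ≤ (n : ℝ) - (∑ i, k i : ℕ) := by
    have : ((∑ i, k i : ℕ) : ℝ) + 1 ≤ n := by exact_mod_cast hk
    linarith
  refine ⟨β, t⁻¹, fun _ => t, by positivity, fun _ => zero_le_one.trans ht, ?_⟩
  calc ltilde X Z y β t⁻¹ (fun _ => t) ≤ c - (n - (∑ i, k i : ℕ)) * Real.log t := hc t ht
    _ ≤ c - Real.log t := by nlinarith
    _ < A := by linarith

/-- Part (c): if `y ∈ M(X,Z)`, the infimum of `l̃` over the parameter space is `−∞`. -/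
theorem ltilde_unbounded_below_of_mem
    (n m r : ℕ) (k : Fin r → ℕ) (hmn : m < n) (hk : ∑ i, k i < n)
    (X : Matrix (Fin n) (Fin m) ℝ) (hX : X.rank = m)
    (Z : ∀ i : Fin r, Matrix (Fin n) (Fin (k i)) ℝ)
    (y : Fin n → ℝ) (hy : y ∈ colSpaceXZ X Z) :
    ∀ A : ℝ, ∃ (β : Fin m → ℝ) (κ₀ : ℝ) (κ : Fin r → ℝ),
      0 < κ₀ ∧ (∀ i, 0 ≤ κ i) ∧ ltilde X Z y β κ₀ κ < A :=
  ltilde_unbounded_below_of_mem_general n m r k hk X Z y hy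
end
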